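/- Let (Z_i)_{i≥1} be real-valued random variables with E[Z_i] = μ and E[Z_i^4] < ∞ for all i, and let (d_n), (K_n) be sequences of positive integers with n = K_n · d_n. Suppose: (i) K_n → ∞; (ii) there is σ² ∈ (0, ∞) such that sup_{1≤k≤K_n} | d_n · E[(W_{n,k} − μ)²] − σ² | → 0; (iii) there is C < ∞ with d_n² · E[(W_{n,k} − μ)^4] ≤ C for all n and all 1 ≤ k ≤ K_n; (iv) for each n, the block random vectors (Z_{(k−1)d_n+1}, …, Z_{k d_n}), k = 1, …, K_n, are pairwise independent. Then, with t_{n,k} = √d_n · (W_{n,k} − μ), the averaged squared block statistics converge to σ² in L²: E[ ( (1/K_n) Σ_{k=1}^{K_n} t_{n,k}² − σ² )² ] → 0 as n → ∞. -/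

import Mathlib

open MeasureTheory ProbabilityTheory Filter Topology

variable {Ω : Type*} [MeasurableSpace Ω]

/-- The `k`-th block mean `W_{n,k} = (1/d) ∑_{i=(k-1)d+1}^{kd} Z_i`. -/
noncomputable def blockMean (Z : ℕ → Ω → ℝ) (d k : ℕ) (ω : Ω) : ℝ :=
  (∑ i ∈ Finset.Ioc ((k - 1) * d) (k * d), Z i ω) / d

/-- The standardized block statistic `t_{n,k} = √d_n (W_{n,k} − μ)`. -/
noncomputable def tBlock (Z : ℕ → Ω → ℝ) (d k : ℕ) (μ : ℝ) (ω : Ω) : ℝ :=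
  Real.sqrt d * (blockMean Z d k ω - μ)

/-- The `k`-th block of `Z` (indices `(k-1)d+1, …, kd`), as a random vector in `ℝ^d`. -/
def blockVec (Z : ℕ → Ω → ℝ) (d k : ℕ) (ω : Ω) : Fin d → ℝ :=
  fun i => Z ((k - 1) * d + 1 + (i : ℕ)) ω

/-! Write `Y_k = t_{n,k}²` and `Ȳ` for their average. Then `E[(Ȳ - σ²)²] = Var Ȳ + (E Ȳ - σ²)²`.
Pairwise independence of the blocks makes the variances add, so
`Var Ȳ ≤ K⁻² ∑ Var Y_k ≤ K⁻² ∑ E[t_{n,k}⁴] ≤ C / K`, which vanishes as `K → ∞`, while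
`|E Ȳ - σ²| ≤ sup_k |d E[(W_{n,k} - μ)²] - σ²|`, which vanishes by the variance condition. -/

open Finset

lemma integrable_pow_iff_memLp {α : Type*} [MeasurableSpace α] {ν : Measure α} {f : α → ℝ}
    {p : ℕ} (hp : p ≠ 0) (hpe : Even p) (hf : AEStronglyMeasurable f ν) :
    Integrable (fun x => f x ^ p) ν ↔ MemLp f p ν := by
  rw [← integrable_norm_rpow_iff hf (by exact_mod_cast hp) (by simp)]
  simp [Real.norm_eq_abs, hpe.pow_abs]

lemma abs_sum_div_card_sub_le {ι : Type*} {s : Finset ι} (hs : s.Nonempty) {a : ι → ℝ}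
    {c ε : ℝ} (h : ∀ k ∈ s, |a k - c| ≤ ε) : |(∑ k ∈ s, a k) / #s - c| ≤ ε := by
  have hcard : (0 : ℝ) < #s := by exact_mod_cast hs.card_pos
  have hdev : (∑ k ∈ s, a k) / #s - c = (∑ k ∈ s, (a k - c)) / #s := by
    rw [sum_sub_distrib, sum_const, nsmul_eq_mul]
    field_simp
  rw [hdev, abs_div, Nat.abs_cast, div_le_iff₀ hcard]
  calc |∑ k ∈ s, (a k - c)| ≤ ∑ k ∈ s, |a k - c| := abs_sum_le_sum_abs _ _
    _ ≤ #s • ε := sum_le_card_nsmul _ _ _ h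
    _ = ε * #s := by rw [nsmul_eq_mul, mul_comm]

lemma integral_sq_sub_eq_variance_add {P : Measure Ω} [IsProbabilityMeasure P] {X : Ω → ℝ}
    (hX : MemLp X 2 P) (c : ℝ) :
    ∫ ω, (X ω - c) ^ 2 ∂P = Var[X; P] + (∫ ω, X ω ∂P - c) ^ 2 := by
  have hXc : MemLp (fun ω => X ω - c) 2 P := hX.sub (memLp_const c)
  rw [← variance_sub_const hX.aestronglyMeasurable c, variance_eq_sub hXc,
    integral_sub (hX.integrable one_le_two) (integrable_const c)]
  simp

lemma memLp_sq_of_memLp_four {α : Type*} [MeasurableSpace α] {ν : Measure α} {f : α → ℝ}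
    (hf : MemLp f 4 ν) : MemLp (fun x => f x ^ 2) 2 ν := by
  have hf4 := (integrable_pow_iff_memLp (p := 4) four_ne_zero (by decide) hf.1).2 hf
  refine (memLp_two_iff_integrable_sq (hf.1.pow 2)).2 ?_
  simpa only [Pi.pow_apply, ← pow_mul] using hf4

lemma tendsto_zero_of_eventually_le_add {ι : Type*} {l : Filter ι} {f g : ι → ℝ}
    (hf : ∀ m, 0 ≤ f m) (hg : Tendsto g l (𝓝 0)) (h : ∀ ε > 0, ∀ᶠ m in l, f m ≤ g m + ε) :
    Tendsto f l (𝓝 0) := by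
  refine tendsto_order.2 ⟨fun a ha => Eventually.of_forall fun m => ha.trans_le (hf m),
    fun a ha => ?_⟩
  filter_upwards [h (a / 2) (half_pos ha), hg.eventually (gt_mem_nhds (half_pos ha))]
    with m hfm hgm
  linarith

lemma integral_sq_average_sub_le {ι : Type*} {P : Measure Ω} [IsProbabilityMeasure P]
    {s : Finset ι} (hs : s.Nonempty) {X : ι → Ω → ℝ} (hX : ∀ k ∈ s, MemLp (X k) 2 P)
    (hind : (s : Set ι).Pairwise fun k j => IndepFun (X k) (X j) P) {c B ε : ℝ}
    (hvar : ∀ k ∈ s, Var[X k; P] ≤ B) (hmean : ∀ k ∈ s, |∫ ω, X k ω ∂P - c| ≤ ε) :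
    ∫ ω, ((∑ k ∈ s, X k ω) / #s - c) ^ 2 ∂P ≤ B / #s + ε ^ 2 := by
  have hcard : (0 : ℝ) < #s := by exact_mod_cast hs.card_pos
  have havg : MemLp (fun ω => (∑ k ∈ s, X k ω) / #s) 2 P := by
    simpa only [div_eq_mul_inv] using (memLp_finsetSum s hX).mul_const (#s : ℝ)⁻¹
  have hvar_avg : Var[fun ω => (∑ k ∈ s, X k ω) / #s; P] ≤ B / #s := by
    have hvar_sum : Var[∑ k ∈ s, X k; P] ≤ #s * B := by
      rw [IndepFun.variance_sum hX hind, ← nsmul_eq_mul]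
      exact sum_le_card_nsmul _ _ _ hvar
    calc Var[fun ω => (∑ k ∈ s, X k ω) / #s; P]
        = Var[∑ k ∈ s, X k; P] * ((#s : ℝ)⁻¹) ^ 2 := by
          simp_rw [div_eq_mul_inv, ← Finset.sum_apply]
          exact variance_mul_const _ _ _
      _ ≤ #s * B * ((#s : ℝ)⁻¹) ^ 2 := by gcongr
      _ = B / #s := by field_simp
  have hmean_avg : |∫ ω, (∑ k ∈ s, X k ω) / #s ∂P - c| ≤ ε := by
    rw [integral_div, integral_finsetSum s fun k hk => (hX k hk).integrable one_le_two]
    exact abs_sum_div_card_sub_le hs hmean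
  rw [integral_sq_sub_eq_variance_add havg c, ← sq_abs (_ - c)]
  exact add_le_add hvar_avg (pow_le_pow_left₀ (abs_nonneg _) hmean_avg 2)

section BlockAlgebra

variable {α : Type*} {Z : ℕ → α → ℝ} {d k : ℕ} {μ : ℝ}

lemma blockMean_eq_sum_blockVec (hk : 1 ≤ k) (ω : α) :
    blockMean Z d k ω = (∑ i, blockVec Z d k ω i) / d := by
  obtain ⟨j, rfl⟩ := Nat.exists_eq_add_of_le' hk
  simp only [blockMean, blockVec, Nat.add_sub_cancel]
  rw [add_one_mul, ← Ico_add_one_add_one_eq_Ioc, sum_Ico_eq_sum_range, Nat.add_right_comm,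
    Nat.add_sub_cancel_left, ← Fin.sum_univ_eq_sum_range (fun i => Z (j * d + 1 + i) ω)]

lemma tBlock_eq_comp_blockVec (hk : 1 ≤ k) :
    tBlock Z d k μ = (fun v : Fin d → ℝ => √d * ((∑ i, v i) / d - μ)) ∘ blockVec Z d k := by
  ext ω
  rw [tBlock, blockMean_eq_sum_blockVec hk, Function.comp_apply]

lemma tBlock_sq (ω : α) : tBlock Z d k μ ω ^ 2 = d * (blockMean Z d k ω - μ) ^ 2 := by
  rw [tBlock, mul_pow, Real.sq_sqrt d.cast_nonneg]

end BlockAlgebra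

section BlockMoments

variable {P : Measure Ω} {Z : ℕ → Ω → ℝ} {d k : ℕ} {μ : ℝ}

lemma indepFun_tBlock {k' : ℕ} (hk : 1 ≤ k) (hk' : 1 ≤ k')
    (h : IndepFun (blockVec Z d k) (blockVec Z d k') P) :
    IndepFun (tBlock Z d k μ) (tBlock Z d k' μ) P := by
  rw [tBlock_eq_comp_blockVec hk, tBlock_eq_comp_blockVec hk']
  exact h.comp (by fun_prop) (by fun_prop)

lemma memLp_tBlock [IsFiniteMeasure P] {p : ENNReal} (hZ : ∀ i, MemLp (Z i) p P) :
    MemLp (tBlock Z d k μ) p P := by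
  have hsum := memLp_finsetSum (Ioc ((k - 1) * d) (k * d)) fun i _ => hZ i
  exact ((hsum.mul_const (d : ℝ)⁻¹).sub (memLp_const μ)).const_mul √d

lemma integral_tBlock_sq :
    ∫ ω, tBlock Z d k μ ω ^ 2 ∂P = d * ∫ ω, (blockMean Z d k ω - μ) ^ 2 ∂P := by
  simp_rw [tBlock_sq]
  exact integral_const_mul _ _

variable [IsProbabilityMeasure P]

lemma variance_tBlock_sq_le (hZ : ∀ i, MemLp (Z i) 4 P) :
    Var[fun ω => tBlock Z d k μ ω ^ 2; P] ≤ d ^ 2 * ∫ ω, (blockMean Z d k ω - μ) ^ 4 ∂P := by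
  calc Var[fun ω => tBlock Z d k μ ω ^ 2; P]
      ≤ ∫ ω, (tBlock Z d k μ ω ^ 2) ^ 2 ∂P := by
        have h := variance_le_expectation_sq (μ := P) (X := fun ω => tBlock Z d k μ ω ^ 2)
          ((memLp_tBlock hZ).1.pow 2)
        simpa only [Pi.pow_apply] using h
    _ = d ^ 2 * ∫ ω, (blockMean Z d k ω - μ) ^ 4 ∂P := by
        simp_rw [tBlock_sq, mul_pow, ← pow_mul]
        exact integral_const_mul _ _

lemma integral_sq_average_tBlock_sq_sub_le {K : ℕ} (hK : 0 < K) (hZ : ∀ i, MemLp (Z i) 4 P)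
    {σ2 ε C : ℝ}
    (hvar : ∀ k, 1 ≤ k → k ≤ K → |(d : ℝ) * ∫ ω, (blockMean Z d k ω - μ) ^ 2 ∂P - σ2| ≤ ε)
    (hC : ∀ k, 1 ≤ k → k ≤ K → (d : ℝ) ^ 2 * ∫ ω, (blockMean Z d k ω - μ) ^ 4 ∂P ≤ C)
    (hindep : ∀ k k', 1 ≤ k → k ≤ K → 1 ≤ k' → k' ≤ K → k ≠ k' →
      IndepFun (blockVec Z d k) (blockVec Z d k') P) :
    ∫ ω, ((∑ k ∈ Icc 1 K, tBlock Z d k μ ω ^ 2) / K - σ2) ^ 2 ∂P ≤ C / K + ε ^ 2 := by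
  have hpair : (Icc 1 K : Set ℕ).Pairwise fun k k' =>
      IndepFun (fun ω => tBlock Z d k μ ω ^ 2) (fun ω => tBlock Z d k' μ ω ^ 2) P := by
    intro k hk k' hk' hne
    simp only [coe_Icc, Set.mem_Icc] at hk hk'
    exact (indepFun_tBlock hk.1 hk'.1 (hindep k k' hk.1 hk.2 hk'.1 hk'.2 hne)).comp
      (measurable_id.pow_const 2) (measurable_id.pow_const 2)
  have h := integral_sq_average_sub_le (s := Icc 1 K) (X := fun k ω => tBlock Z d k μ ω ^ 2)
    ⟨1, mem_Icc.2 ⟨le_rfl, hK⟩⟩ (fun k _ => memLp_sq_of_memLp_four (memLp_tBlock hZ)) hpair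
    (fun k hk => (variance_tBlock_sq_le hZ).trans (hC k (mem_Icc.1 hk).1 (mem_Icc.1 hk).2))
    (fun k hk => integral_tBlock_sq (P := P) ▸ hvar k (mem_Icc.1 hk).1 (mem_Icc.1 hk).2)
  simpa only [Nat.card_Icc, Nat.add_sub_cancel] using h

end BlockMoments

theorem averaged_squared_block_statistics_L2_convergence_general
    (P : Measure Ω) [IsProbabilityMeasure P]
    (Z : ℕ → Ω → ℝ) (μ σ2 : ℝ) (d K : ℕ → ℕ)
    (hmeas : ∀ i, Measurable (Z i))
    (hmom : ∀ i, Integrable (fun ω => (Z i ω) ^ 4) P)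
    (hK : ∀ m, 0 < K m)
    -- (i) `K_n → ∞`
    (hKtop : Tendsto (fun m => K m) atTop atTop)
    -- (ii) `sup_{1≤k≤K_n} |d_n · E[(W_{n,k} − μ)²] − σ²| → 0` with `σ² ∈ (0, ∞)`
    (hvar : ∀ ε > (0 : ℝ), ∃ N, ∀ m ≥ N, ∀ k, 1 ≤ k → k ≤ K m →
      |(d m : ℝ) * ∫ ω, (blockMean Z (d m) k ω - μ) ^ 2 ∂P - σ2| ≤ ε)
    -- (iii) uniform fourth-moment bound on the blocks
    (C : ℝ)
    (hC : ∀ m, ∀ k, 1 ≤ k → k ≤ K m →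
      (d m : ℝ) ^ 2 * ∫ ω, (blockMean Z (d m) k ω - μ) ^ 4 ∂P ≤ C)
    -- (iv) pairwise independence of the block random vectors
    (hindep : ∀ m, ∀ k k', 1 ≤ k → k ≤ K m → 1 ≤ k' → k' ≤ K m → k ≠ k' →
      IndepFun (blockVec Z (d m) k) (blockVec Z (d m) k') P) :
    Tendsto
      (fun m => ∫ ω,
        ((∑ k ∈ Finset.Icc 1 (K m), (tBlock Z (d m) k μ ω) ^ 2) / (K m) - σ2) ^ 2 ∂P)
      atTop (𝓝 0) := by
  have hZ : ∀ i, MemLp (Z i) 4 P := fun i =>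
    (integrable_pow_iff_memLp four_ne_zero (by decide) (hmeas i).aestronglyMeasurable).1 (hmom i)
  have hCK : Tendsto (fun m => C / K m) atTop (𝓝 0) :=
    tendsto_const_nhds.div_atTop (tendsto_natCast_atTop_atTop.comp hKtop)
  refine tendsto_zero_of_eventually_le_add (fun m => integral_nonneg fun ω => sq_nonneg _) hCK
    fun ε hε => ?_
  obtain ⟨N, hN⟩ := hvar √ε (Real.sqrt_pos.2 hε)
  filter_upwards [eventually_ge_atTop N] with m hm
  simpa only [Real.sq_sqrt hε.le] using
    integral_sq_average_tBlock_sq_sub_le (hK m) hZ (hN m hm) (hC m) (hindep m)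

/-- First main step in the proof of Theorem 1: the averaged squared standardized
block statistics `(1/K_n) ∑_{k=1}^{K_n} t_{n,k}²` converge to `σ²` in `L²`. -/
theorem averaged_squared_block_statistics_L2_convergence
    (P : Measure Ω) [IsProbabilityMeasure P]
    (Z : ℕ → Ω → ℝ) (μ σ2 : ℝ) (d K : ℕ → ℕ)
    (hmeas : ∀ i, Measurable (Z i))
    (hmom : ∀ i, Integrable (fun ω => (Z i ω) ^ 4) P)
    (hmean : ∀ i, ∫ ω, Z i ω ∂P = μ)
    (hd : ∀ m, 0 < d m) (hK : ∀ m, 0 < K m)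
    -- (i) `K_n → ∞`
    (hKtop : Tendsto (fun m => K m) atTop atTop)
    -- (ii) `sup_{1≤k≤K_n} |d_n · E[(W_{n,k} − μ)²] − σ²| → 0` with `σ² ∈ (0, ∞)`
    (hσ2 : 0 < σ2)
    (hvar : ∀ ε > (0 : ℝ), ∃ N, ∀ m ≥ N, ∀ k, 1 ≤ k → k ≤ K m →
      |(d m : ℝ) * ∫ ω, (blockMean Z (d m) k ω - μ) ^ 2 ∂P - σ2| ≤ ε)
    -- (iii) uniform fourth-moment bound on the blocks
    (C : ℝ)
    (hC : ∀ m, ∀ k, 1 ≤ k → k ≤ K m →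
      (d m : ℝ) ^ 2 * ∫ ω, (blockMean Z (d m) k ω - μ) ^ 4 ∂P ≤ C)
    -- (iv) pairwise independence of the block random vectors
    (hindep : ∀ m, ∀ k k', 1 ≤ k → k ≤ K m → 1 ≤ k' → k' ≤ K m → k ≠ k' →
      IndepFun (blockVec Z (d m) k) (blockVec Z (d m) k') P) :
    Tendsto
      (fun m => ∫ ω,
        ((∑ k ∈ Finset.Icc 1 (K m), (tBlock Z (d m) k μ ω) ^ 2) / (K m) - σ2) ^ 2 ∂P)
      atTop (𝓝 0) :=
  averaged_squared_block_statistics_L2_convergence_general P Z μ σ2 d K hmeas hmom hK hKtop hvar C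
    hC hindep
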